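/- Let I be a finite linearly ordered set, ℋ a complex Hilbert space of dimension 2^{|I|}, (a_i)_{i∈I} a family in ℒ(ℋ) satisfying the canonical anticommutation relations, and Ω ∈ ℋ a unit vector with a_i Ω = 0 for all i ∈ I. For f : I → {0,1,2,3} define the normalized monomial M_f := n_f · Π_{i∈I} m_{i,f(i)} (product in increasing order of i), where m_{i,0} := 1, m_{i,1} := a_i, m_{i,2} := a*_i, m_{i,3} := a*_i a_i − a_i a*_i, and n_f := 2^{−|{i ∈ I : f(i) ∈ {0,3}}|/2}. Then the 4^{|I|} monomials {M_f : f ∈ {0,1,2,3}^I} form an orthonormal basis of ℒ(ℋ) with respect to the Hilbert–Schmidt inner product ⟨A, B⟩ := tr(A* B). -/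

import Mathlib

/-!
For `S ⊆ I` let `Ω_S` be the product of the creators `a*_i`, `i ∈ S`, in increasing order,
applied to `Ω`. The CAR and `a_i Ω = 0` make these `2^|I|` vectors orthonormal, so they form an
orthonormal basis and `tr T = ∑_S ⟪Ω_S, T Ω_S⟫`. Each factor `m_{i,k}` sends `Ω_S` to a multiple
of some `Ω_{S'}` with `S'` differing from `S` at most at `i`, with a sign depending only on `S`
and `i`.
Peeling off the factors from the right therefore gives
`⟪Π m_{i,f i} Ω_S, Π m_{i,g i} Ω_S⟫ = ∏_i W_{i ∈ S}(f i, g i)`, where `W_b` is the Gram matrix of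
the four one-mode operators on the empty or occupied state. Summing over `S` factorizes into
`∏_i (W_0 + W_1)(f i, g i)`, and `W_0 + W_1 = diag(2, 1, 1, 2)` is exactly cancelled by `n_f n_g`.
Finally `4^|I|` orthonormal operators span the `(2^|I|)²`-dimensional space `ℒ(ℋ)`.
-/

open ContinuousLinearMap

noncomputable section

variable {ℋ : Type*} [NormedAddCommGroup ℋ] [InnerProductSpace ℂ ℋ] [FiniteDimensional ℂ ℋ]

/-- The basic factors `m_{i,0} = 1`, `m_{i,1} = a_i`, `m_{i,2} = a*_i`,
`m_{i,3} = a*_i a_i − a_i a*_i`. -/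
def mFactor (a : ℋ →L[ℂ] ℋ) : Fin 4 → (ℋ →L[ℂ] ℋ) :=
  ![1, a, adjoint a, adjoint a * a - a * adjoint a]

/-- The normalized monomial `M_f = n_f · Π_{i∈I} m_{i,f(i)}` (product in increasing index
order), with `n_f = 2^{-|{i : f(i) ∈ {0,3}}|/2}`. -/
def monomial {I : Type*} [Fintype I] [LinearOrder I] [DecidableEq I]
    (a : I → ℋ →L[ℂ] ℋ) (f : I → Fin 4) : ℋ →L[ℂ] ℋ :=
  ((2 : ℝ) ^ (-((Finset.univ.filter fun i => f i = 0 ∨ f i = 3).card : ℝ) / 2)) •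
    ((Finset.univ.sort (· ≤ ·)).map fun i => mFactor (a i) (f i)).prod

open Finset InnerProductSpace

lemma LinearMap.trace_eq_sum_inner_of_orthonormal {𝕜 E ι : Type*} [RCLike 𝕜]
    [NormedAddCommGroup E] [InnerProductSpace 𝕜 E] [FiniteDimensional 𝕜 E] [Fintype ι]
    {v : ι → E} (hv : Orthonormal 𝕜 v) (hcard : Fintype.card ι = Module.finrank 𝕜 E)
    (T : E →ₗ[𝕜] E) :
    LinearMap.trace 𝕜 E T = ∑ i, ⟪v i, T (v i)⟫_𝕜 :=
  T.trace_eq_sum_inner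
    (OrthonormalBasis.mk hv (hv.linearIndependent.span_eq_top_of_card_eq_finrank' hcard).ge)
    |>.trans (by simp)

lemma linearIndependent_of_trace_adjoint_mul {𝕜 E ι : Type*} [RCLike 𝕜] [NormedAddCommGroup E]
    [InnerProductSpace 𝕜 E] [CompleteSpace E] [Fintype ι] [DecidableEq ι] {v : ι → E →L[𝕜] E}
    (hv : ∀ i j, LinearMap.trace 𝕜 E (adjoint (v i) * v j).toLinearMap = if i = j then 1 else 0) :
    LinearIndependent 𝕜 v := by
  rw [Fintype.linearIndependent_iff]
  intro c hc j
  let φ : (E →L[𝕜] E) →ₗ[𝕜] 𝕜 :=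
    LinearMap.trace 𝕜 E ∘ₗ coeLM 𝕜 ∘ₗ LinearMap.mulLeft 𝕜 (adjoint (v j))
  have hφ : φ (∑ i, c i • v i) = c j := by
    simp only [φ, map_sum, map_smul, LinearMap.comp_apply, LinearMap.mulLeft_apply, coeLM_apply,
      hv, smul_eq_mul, mul_ite, mul_one, mul_zero, sum_ite_eq, if_pos (mem_univ j)]
  rw [hc, map_zero] at hφ
  exact hφ.symm

lemma ContinuousLinearMap.finrank_self {𝕜 E : Type*} [NontriviallyNormedField 𝕜]
    [CompleteSpace 𝕜] [NormedAddCommGroup E] [NormedSpace 𝕜 E] [FiniteDimensional 𝕜 E] :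
    Module.finrank 𝕜 (E →L[𝕜] E) = Module.finrank 𝕜 E ^ 2 := by
  rw [← LinearMap.toContinuousLinearMap.finrank_eq, Module.finrank_linearMap, sq]

lemma Finset.sum_prod_decide_mem {ι M : Type*} [Fintype ι] [DecidableEq ι] [CommSemiring M]
    (F : ι → Bool → M) :
    ∑ S : Finset ι, ∏ i, F i (decide (i ∈ S)) = ∏ i, (F i true + F i false) := by
  rw [prod_add, powerset_univ]
  refine sum_congr rfl fun S _ => ?_
  rw [← prod_mul_prod_compl S]
  congr 1
  · exact prod_congr rfl fun i hi => by simp [hi]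
  · exact prod_congr rfl fun i hi => by simp [mem_compl.1 hi]

lemma two_rpow_neg_half_mul_self_mul_pow (n : ℕ) :
    (2 : ℝ) ^ (-(n : ℝ) / 2) * (2 : ℝ) ^ (-(n : ℝ) / 2) * 2 ^ n = 1 := by
  rw [← Real.rpow_add two_pos, ← add_div, ← two_mul, mul_div_cancel_left₀ _ two_ne_zero,
    Real.rpow_neg two_pos.le, Real.rpow_natCast, inv_mul_cancel₀ (by positivity)]

structure IsCAR {I : Type*} (a : I → ℋ →L[ℂ] ℋ) : Prop where
  anticomm_adjoint_self : ∀ i, a i * adjoint (a i) + adjoint (a i) * a i = 1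
  anticomm_adjoint_of_ne : ∀ i j, i ≠ j → a i * adjoint (a j) + adjoint (a j) * a i = 0
  anticomm : ∀ i j, a i * a j + a j * a i = 0

namespace IsCAR

variable {I : Type*} {a : I → ℋ →L[ℂ] ℋ}

lemma adjoint_mul_adjoint (h : IsCAR a) (i j : I) :
    adjoint (a i) * adjoint (a j) = -(adjoint (a j) * adjoint (a i)) := by
  have := congrArg star (h.anticomm j i)
  simp only [star_add, star_mul, star_zero, star_eq_adjoint] at this
  exact eq_neg_of_add_eq_zero_left this

lemma adjoint_mul_self (h : IsCAR a) (i : I) : adjoint (a i) * adjoint (a i) = 0 := by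
  have := h.adjoint_mul_adjoint i i
  rwa [eq_neg_iff_add_eq_zero, ← two_smul ℂ, smul_eq_zero_iff_right two_ne_zero] at this

lemma mul_adjoint_of_ne (h : IsCAR a) {i j : I} (hij : i ≠ j) :
    a i * adjoint (a j) = -(adjoint (a j) * a i) :=
  eq_neg_of_add_eq_zero_left (h.anticomm_adjoint_of_ne i j hij)

lemma mul_adjoint_self (h : IsCAR a) (i : I) :
    a i * adjoint (a i) = 1 - adjoint (a i) * a i :=
  eq_sub_of_add_eq (h.anticomm_adjoint_self i)

end IsCAR

section

variable {I : Type*} [LinearOrder I]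

def fockVector (a : I → ℋ →L[ℂ] ℋ) (Ω : ℋ) (S : Finset I) : ℋ :=
  ((S.sort (· ≤ ·)).map fun i => adjoint (a i)).prod Ω

-- The sign picked up when `a i` or `adjoint (a i)` is anticommuted past the creators `j < i`.
def fockSign (S : Finset I) (i : I) : ℂ := (-1) ^ #{j ∈ S | j < i}

lemma fockSign_of_forall_le {S : Finset I} {i : I} (h : ∀ x ∈ S, i ≤ x) :
    fockSign S i = 1 := by
  rw [fockSign, filter_false_of_mem fun x hx => not_lt.2 (h x hx), card_empty, pow_zero]

lemma fockSign_insert_of_lt {S : Finset I} {i j : I} (hji : j < i) (hj : j ∉ S) :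
    fockSign (insert j S) i = -fockSign S i := by
  rw [fockSign, fockSign, filter_insert, if_pos hji, card_insert_of_notMem (by simp [hj]),
    pow_succ, mul_neg_one]

lemma fockSign_insert_self (S : Finset I) (i : I) : fockSign (insert i S) i = fockSign S i := by
  rw [fockSign, fockSign, filter_insert, if_neg (lt_irrefl i)]

lemma fockSign_erase_self (S : Finset I) (i : I) : fockSign (S.erase i) i = fockSign S i := by
  rw [fockSign, fockSign, filter_erase, erase_eq_of_notMem (by simp)]

lemma fockSign_mul_self (S : Finset I) (i : I) : fockSign S i * fockSign S i = 1 := by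
  rw [fockSign, ← mul_pow, neg_one_mul, neg_neg, one_pow]

lemma conj_fockSign (S : Finset I) (i : I) : starRingEnd ℂ (fockSign S i) = fockSign S i := by
  simp [fockSign]

section Fock

variable {a : I → ℋ →L[ℂ] ℋ} {Ω : ℋ}

lemma fockVector_empty : fockVector a Ω ∅ = Ω := by
  simp [fockVector]

lemma fockVector_insert_of_forall_lt {S : Finset I} {i : I} (h : ∀ x ∈ S, i < x) :
    fockVector a Ω (insert i S) = adjoint (a i) (fockVector a Ω S) := by
  rw [fockVector, sort_insert _ (fun x hx => (h x hx).le) fun hi => lt_irrefl i (h i hi)]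
  simp [fockVector, mul_apply_eq_comp]

lemma apply_fockVector_of_notMem (h : IsCAR a) (hΩ : ∀ i, a i Ω = 0) {S : Finset I} {i : I}
    (hi : i ∉ S) : a i (fockVector a Ω S) = 0 := by
  induction S using Finset.induction_on_min with
  | empty => rw [fockVector_empty, hΩ]
  | insert m S hm ih =>
    have him : i ≠ m := fun e => hi (e ▸ mem_insert_self m S)
    rw [fockVector_insert_of_forall_lt hm, ← mul_apply_eq_comp, h.mul_adjoint_of_ne him,
      neg_apply, mul_apply_eq_comp, ih fun h => hi (mem_insert_of_mem h), map_zero, neg_zero]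

lemma apply_fockVector_of_mem (h : IsCAR a) (hΩ : ∀ i, a i Ω = 0) {S : Finset I} {i : I}
    (hi : i ∈ S) : a i (fockVector a Ω S) = fockSign S i • fockVector a Ω (S.erase i) := by
  induction S using Finset.induction_on_min with
  | empty => exact absurd hi (notMem_empty i)
  | insert m S hm ih =>
    have hmS : m ∉ S := fun h => (hm m h).false
    rw [fockVector_insert_of_forall_lt hm, ← mul_apply_eq_comp]
    rcases eq_or_ne i m with rfl | him
    · rw [h.mul_adjoint_self, sub_apply, one_apply_eq_self, mul_apply_eq_comp,
        apply_fockVector_of_notMem h hΩ hmS, map_zero, sub_zero, fockSign_insert_self,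
        fockSign_of_forall_le fun x hx => (hm x hx).le, one_smul, erase_insert hmS]
    · have hiS : i ∈ S := (mem_insert.1 hi).resolve_left him
      rw [h.mul_adjoint_of_ne him, neg_apply, mul_apply_eq_comp, ih hiS, map_smul,
        ← fockVector_insert_of_forall_lt fun x hx => hm x (mem_of_mem_erase hx),
        fockSign_insert_of_lt (hm i hiS) hmS, neg_smul, erase_insert_of_ne (Ne.symm him)]

lemma adjoint_apply_fockVector_of_mem (h : IsCAR a) {S : Finset I} {i : I} (hi : i ∈ S) :
    adjoint (a i) (fockVector a Ω S) = 0 := by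
  induction S using Finset.induction_on_min with
  | empty => exact absurd hi (notMem_empty i)
  | insert m S hm ih =>
    rw [fockVector_insert_of_forall_lt hm, ← mul_apply_eq_comp]
    rcases eq_or_ne i m with rfl | him
    · rw [h.adjoint_mul_self, zero_apply]
    · rw [h.adjoint_mul_adjoint, neg_apply, mul_apply_eq_comp,
        ih ((mem_insert.1 hi).resolve_left him), map_zero, neg_zero]

lemma adjoint_apply_fockVector_of_notMem (h : IsCAR a) {S : Finset I} {i : I} (hi : i ∉ S) :
    adjoint (a i) (fockVector a Ω S) = fockSign S i • fockVector a Ω (insert i S) := by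
  induction S using Finset.induction_on_min with
  | empty =>
    rw [fockSign_of_forall_le (by simp), one_smul, fockVector_insert_of_forall_lt (by simp)]
  | insert m S hm ih =>
    have hmS : m ∉ S := fun h => (hm m h).false
    have him : i ≠ m := fun e => hi (e ▸ mem_insert_self m S)
    rcases lt_or_gt_of_ne him with hlt | hgt
    · have hlt' : ∀ x ∈ insert m S, i < x := by
        simpa using ⟨hlt, fun x hx => hlt.trans (hm x hx)⟩
      rw [fockSign_of_forall_le fun x hx => (hlt' x hx).le, one_smul,
        fockVector_insert_of_forall_lt hlt']
    · rw [fockVector_insert_of_forall_lt hm, ← mul_apply_eq_comp, h.adjoint_mul_adjoint,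
        neg_apply, mul_apply_eq_comp, ih fun h => hi (mem_insert_of_mem h), map_smul,
        ← fockVector_insert_of_forall_lt (by simpa using ⟨hgt, hm⟩),
        fockSign_insert_of_lt hgt hmS, neg_smul, Finset.insert_comm]

lemma orthonormal_fockVector (h : IsCAR a) (hΩ : ∀ i, a i Ω = 0) (hΩn : ‖Ω‖ = 1) :
    Orthonormal ℂ (fockVector a Ω) := by
  rw [orthonormal_iff_ite]
  intro S
  induction S using Finset.induction_on_min with
  | empty =>
    intro T
    induction T using Finset.induction_on_min with
    | empty => rw [if_pos rfl, fockVector_empty, inner_self_eq_norm_sq_to_K, hΩn]; norm_num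
    | insert m T hm _ =>
      rw [if_neg (insert_ne_empty m T).symm, fockVector_insert_of_forall_lt hm, fockVector_empty,
        adjoint_inner_right, hΩ, inner_zero_left]
  | insert m S hm ih =>
    intro T
    have hmS : m ∉ S := fun h => (hm m h).false
    rw [fockVector_insert_of_forall_lt hm, adjoint_inner_left]
    by_cases hmT : m ∈ T
    · rw [apply_fockVector_of_mem h hΩ hmT, inner_smul_right, ih]
      by_cases hST : S = T.erase m
      · have hT : insert m S = T := by rw [hST, insert_erase hmT]
        rw [if_pos hST, if_pos hT, mul_one, ← hT, fockSign_insert_self,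
          fockSign_of_forall_le fun x hx => (hm x hx).le]
      · rw [if_neg hST, if_neg fun hT => hST (by rw [← hT, erase_insert hmS]), mul_zero]
    · rw [apply_fockVector_of_notMem h hΩ hmT, inner_zero_right,
        if_neg fun (hT : insert m S = T) => hmT (hT ▸ mem_insert_self m S)]

lemma adjoint_mul_sub_mul_adjoint_apply_fockVector (h : IsCAR a) (hΩ : ∀ i, a i Ω = 0)
    (S : Finset I) (i : I) :
    (adjoint (a i) * a i - a i * adjoint (a i)) (fockVector a Ω S) =
      (if i ∈ S then (1 : ℂ) else -1) • fockVector a Ω S := by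
  rw [sub_apply, mul_apply_eq_comp, mul_apply_eq_comp]
  by_cases hi : i ∈ S
  · rw [apply_fockVector_of_mem h hΩ hi, map_smul,
      adjoint_apply_fockVector_of_notMem h (notMem_erase i S),
      adjoint_apply_fockVector_of_mem h hi, map_zero, sub_zero, fockSign_erase_self,
      insert_erase hi, smul_smul, fockSign_mul_self, if_pos hi]
  · rw [apply_fockVector_of_notMem h hΩ hi, map_zero, adjoint_apply_fockVector_of_notMem h hi,
      map_smul, apply_fockVector_of_mem h hΩ (mem_insert_self i S), fockSign_insert_self,
      erase_insert hi, smul_smul, fockSign_mul_self, if_neg hi, zero_sub, one_smul, neg_one_smul]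

end Fock

def siteNext (k : Fin 4) (S : Finset I) (i : I) : Finset I :=
  ![S, S.erase i, insert i S, S] k

def siteCoeff (k : Fin 4) (S : Finset I) (i : I) : ℂ :=
  ![1, if i ∈ S then fockSign S i else 0, if i ∈ S then 0 else fockSign S i,
    if i ∈ S then 1 else -1] k

/-- The Gram matrix `⟪m_k e_b, m_k' e_b⟫` of the one-mode operators `m_0 = 1`, `m_1 = a`,
`m_2 = a*`, `m_3 = a*a - aa*` on `ℂ²`, applied to the occupied (`b = true`) or empty state. -/
def siteWeight (b : Bool) : Matrix (Fin 4) (Fin 4) ℂ :=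
  if b then !![1, 0, 0, 1; 0, 1, 0, 0; 0, 0, 0, 0; 1, 0, 0, 1]
  else !![1, 0, 0, -1; 0, 0, 0, 0; 0, 0, 1, 0; -1, 0, 0, 1]

lemma mem_siteNext_of_ne (k : Fin 4) (S : Finset I) {i j : I} (hji : j ≠ i) :
    j ∈ siteNext k S i ↔ j ∈ S := by
  fin_cases k <;> simp [siteNext, hji]

lemma siteNext_eq_of_mem_iff {k k' : Fin 4} {S : Finset I} {i : I}
    (h : i ∈ siteNext k S i ↔ i ∈ siteNext k' S i) : siteNext k S i = siteNext k' S i := by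
  ext j
  rcases eq_or_ne j i with rfl | hji
  · exact h
  · rw [mem_siteNext_of_ne k S hji, mem_siteNext_of_ne k' S hji]

lemma conj_siteCoeff_mul_siteCoeff {k k' : Fin 4} {S : Finset I} {i : I}
    (h : i ∈ siteNext k S i ↔ i ∈ siteNext k' S i) :
    starRingEnd ℂ (siteCoeff k S i) * siteCoeff k' S i = siteWeight (decide (i ∈ S)) k k' := by
  by_cases hi : i ∈ S <;> fin_cases k <;> fin_cases k' <;>
    simp_all [siteNext, siteCoeff, siteWeight, conj_fockSign, fockSign_mul_self]

lemma siteWeight_eq_zero {k k' : Fin 4} {S : Finset I} {i : I}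
    (h : ¬(i ∈ siteNext k S i ↔ i ∈ siteNext k' S i)) :
    siteWeight (decide (i ∈ S)) k k' = 0 := by
  by_cases hi : i ∈ S <;> fin_cases k <;> fin_cases k' <;> simp_all [siteNext, siteWeight]

lemma siteWeight_true_add_false :
    siteWeight true + siteWeight false =
      Matrix.diagonal fun k => if k = 0 ∨ k = 3 then 2 else 1 := by
  ext k k'
  fin_cases k <;> fin_cases k' <;> norm_num [siteWeight] <;> decide

lemma sum_prod_siteWeight [Fintype I] (f g : I → Fin 4) :
    ∑ S : Finset I, ∏ i, siteWeight (decide (i ∈ S)) (f i) (g i) =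
      if f = g then 2 ^ #{i | f i = 0 ∨ f i = 3} else 0 := by
  simp only [sum_prod_decide_mem fun i b => siteWeight b (f i) (g i), ← Matrix.add_apply,
    siteWeight_true_add_false, Matrix.diagonal_apply]
  split_ifs with hfg
  · subst hfg
    simp only [if_true, prod_ite, prod_const_one, mul_one, prod_const]
  · obtain ⟨i, hi⟩ := Function.ne_iff.1 hfg
    exact prod_eq_zero (mem_univ i) (if_neg hi)

section Words

variable {a : I → ℋ →L[ℂ] ℋ} {Ω : ℋ}

def mFactorProd (a : I → ℋ →L[ℂ] ℋ) (f : I → Fin 4) (l : List I) : ℋ →L[ℂ] ℋ :=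
  (l.map fun i => mFactor (a i) (f i)).prod

lemma mFactor_apply_fockVector (h : IsCAR a) (hΩ : ∀ i, a i Ω = 0) (k : Fin 4)
    (S : Finset I) (i : I) :
    mFactor (a i) k (fockVector a Ω S) = siteCoeff k S i • fockVector a Ω (siteNext k S i) := by
  fin_cases k
  · simp [mFactor, siteCoeff, siteNext]
  · by_cases hi : i ∈ S
    · simpa [mFactor, siteCoeff, siteNext, hi] using apply_fockVector_of_mem h hΩ hi
    · simpa [mFactor, siteCoeff, siteNext, hi] using apply_fockVector_of_notMem h hΩ hi
  · by_cases hi : i ∈ S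
    · simpa [mFactor, siteCoeff, siteNext, hi] using adjoint_apply_fockVector_of_mem h hi
    · simpa [mFactor, siteCoeff, siteNext, hi] using adjoint_apply_fockVector_of_notMem h hi
  · simpa [mFactor, siteCoeff, siteNext] using
      adjoint_mul_sub_mul_adjoint_apply_fockVector h hΩ S i

lemma mFactorProd_append_apply_fockVector (h : IsCAR a) (hΩ : ∀ i, a i Ω = 0) (f : I → Fin 4)
    (l : List I) (i : I) (S : Finset I) :
    mFactorProd a f (l ++ [i]) (fockVector a Ω S) =
      siteCoeff (f i) S i • mFactorProd a f l (fockVector a Ω (siteNext (f i) S i)) := by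
  rw [mFactorProd, List.map_append, List.prod_append, List.map_singleton, List.prod_singleton,
    mul_apply_eq_comp, mFactor_apply_fockVector h hΩ, map_smul]
  rfl

lemma inner_mFactorProd_fockVector_of_not_iff (h : IsCAR a) (hΩ : ∀ i, a i Ω = 0)
    (hΩn : ‖Ω‖ = 1) (f g : I → Fin 4) {l : List I} {x : I} (hx : x ∉ l) {S T : Finset I}
    (hST : ¬(x ∈ S ↔ x ∈ T)) :
    ⟪mFactorProd a f l (fockVector a Ω S), mFactorProd a g l (fockVector a Ω T)⟫_ℂ = 0 := by
  induction l using List.reverseRecOn generalizing S T with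
  | nil =>
    simp only [mFactorProd, List.map_nil, List.prod_nil, one_apply_eq_self]
    rw [orthonormal_iff_ite.1 (orthonormal_fockVector h hΩ hΩn),
      if_neg (by rintro rfl; simp at hST)]
  | append_singleton l i ih =>
    have hxi : x ≠ i := fun e => hx (by simp [e])
    rw [mFactorProd_append_apply_fockVector h hΩ, mFactorProd_append_apply_fockVector h hΩ,
      inner_smul_left, inner_smul_right, ih (fun e => hx (by simp [e])), mul_zero, mul_zero]
    rwa [mem_siteNext_of_ne _ _ hxi, mem_siteNext_of_ne _ _ hxi]

lemma inner_mFactorProd_fockVector (h : IsCAR a) (hΩ : ∀ i, a i Ω = 0) (hΩn : ‖Ω‖ = 1)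
    (f g : I → Fin 4) {l : List I} (hl : l.Nodup) (S : Finset I) :
    ⟪mFactorProd a f l (fockVector a Ω S), mFactorProd a g l (fockVector a Ω S)⟫_ℂ =
      (l.map fun i => siteWeight (decide (i ∈ S)) (f i) (g i)).prod := by
  induction l using List.reverseRecOn generalizing S with
  | nil =>
    simp only [mFactorProd, List.map_nil, List.prod_nil, one_apply_eq_self]
    rw [orthonormal_iff_ite.1 (orthonormal_fockVector h hΩ hΩn), if_pos rfl]
  | append_singleton l i ih =>
    obtain ⟨hil, hl'⟩ := (List.nodup_concat l i).1 (by simpa using hl)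
    rw [mFactorProd_append_apply_fockVector h hΩ, mFactorProd_append_apply_fockVector h hΩ,
      inner_smul_left, inner_smul_right, List.map_append, List.prod_append, List.map_singleton,
      List.prod_singleton, ← mul_assoc, mul_comm]
    by_cases hiff : i ∈ siteNext (f i) S i ↔ i ∈ siteNext (g i) S i
    · rw [← siteNext_eq_of_mem_iff hiff, ih hl', conj_siteCoeff_mul_siteCoeff hiff]
      congr 2
      refine List.map_congr_left fun j hj => ?_
      rw [decide_eq_decide.2 (mem_siteNext_of_ne _ _ fun (e : j = i) => hil (e ▸ hj))]
    · rw [inner_mFactorProd_fockVector_of_not_iff h hΩ hΩn f g hil hiff, siteWeight_eq_zero hiff,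
        mul_zero, zero_mul]

end Words

section Monomials

variable [Fintype I] {a : I → ℋ →L[ℂ] ℋ} {Ω : ℋ}

lemma trace_adjoint_mFactorProd_mul (h : IsCAR a) (hΩ : ∀ i, a i Ω = 0) (hΩn : ‖Ω‖ = 1)
    (hdim : Module.finrank ℂ ℋ = 2 ^ Fintype.card I) (f g : I → Fin 4) :
    LinearMap.trace ℂ ℋ (adjoint (mFactorProd a f (univ.sort (· ≤ ·))) *
        mFactorProd a g (univ.sort (· ≤ ·))).toLinearMap =
      if f = g then 2 ^ #{i | f i = 0 ∨ f i = 3} else 0 := by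
  rw [LinearMap.trace_eq_sum_inner_of_orthonormal (orthonormal_fockVector h hΩ hΩn)
    (by rw [Fintype.card_finset, hdim]), ← sum_prod_siteWeight]
  refine sum_congr rfl fun S _ => ?_
  rw [coe_coe, mul_apply_eq_comp, adjoint_inner_right,
    inner_mFactorProd_fockVector h hΩ hΩn f g (sort_nodup _ _), ← Multiset.prod_coe,
    ← Multiset.map_coe, sort_eq]
  rfl

lemma monomial_eq_smul [DecidableEq I] (f : I → Fin 4) :
    monomial a f = (((2 : ℝ) ^ (-(#{i | f i = 0 ∨ f i = 3} : ℝ) / 2) : ℝ) : ℂ) •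
      mFactorProd a f (univ.sort (· ≤ ·)) := by
  rw [monomial, Complex.coe_smul]
  rfl

lemma trace_adjoint_monomial_mul_monomial [DecidableEq I] (h : IsCAR a) (hΩ : ∀ i, a i Ω = 0)
    (hΩn : ‖Ω‖ = 1) (hdim : Module.finrank ℂ ℋ = 2 ^ Fintype.card I) (f g : I → Fin 4) :
    LinearMap.trace ℂ ℋ (adjoint (monomial a f) * monomial a g).toLinearMap =
      if f = g then 1 else 0 := by
  rw [monomial_eq_smul, monomial_eq_smul, ← star_eq_adjoint, star_smul, Complex.star_def,
    Complex.conj_ofReal, star_eq_adjoint, smul_mul_smul_comm, toLinearMap_smul, map_smul,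
    trace_adjoint_mFactorProd_mul h hΩ hΩn hdim]
  split_ifs with hfg
  · subst hfg
    rw [smul_eq_mul]
    exact_mod_cast two_rpow_neg_half_mul_self_mul_pow _
  · rw [smul_zero]

end Monomials

end

/-- for a CAR family `(a_i)_{i∈I}` on a Hilbert space of dimension `2^|I|` with a
vacuum vector `Ω`, the `4^|I|` normalized monomials `M_f` form an orthonormal basis of `ℒ(ℋ)`
with the Hilbert–Schmidt inner product `⟨A,B⟩ = tr(A*B)`: they are orthonormal and they span. -/
theorem stmt13 {I : Type*} [Fintype I] [LinearOrder I] [DecidableEq I]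
    (hdim : Module.finrank ℂ ℋ = 2 ^ Fintype.card I)
    (a : I → ℋ →L[ℂ] ℋ)
    (car_mix : ∀ i j : I, a i * adjoint (a j) + adjoint (a j) * a i = if i = j then 1 else 0)
    (car_ann : ∀ i j : I, a i * a j + a j * a i = 0)
    (Ω : ℋ) (hΩn : ‖Ω‖ = 1) (hΩ : ∀ i : I, a i Ω = 0) :
    (∀ f g : I → Fin 4,
        LinearMap.trace ℂ ℋ (adjoint (monomial a f) * monomial a g).toLinearMap
          = if f = g then 1 else 0) ∧
    Submodule.span ℂ (Set.range fun f : I → Fin 4 => monomial a f)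
      = (⊤ : Submodule ℂ (ℋ →L[ℂ] ℋ)) := by
  have h : IsCAR a :=
    ⟨fun i => by simpa using car_mix i i, fun i j hij => by simpa [hij] using car_mix i j, car_ann⟩
  have horth := trace_adjoint_monomial_mul_monomial h hΩ hΩn hdim
  refine ⟨horth, (linearIndependent_of_trace_adjoint_mul horth).span_eq_top_of_card_eq_finrank' ?_⟩
  rw [ContinuousLinearMap.finrank_self, hdim, Fintype.card_fun, Fintype.card_fin, ← pow_mul,
    mul_comm, pow_mul]
  norm_num
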